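/- arXiv:2009.09031 — 6 statements merged into one kernel-verified Lean document; each statement's English description precedes it below -/
import Mathlib

section
/- Let S, D, Df be Boolean variables and X range over a finite nonempty type. Let p be a probability mass function on S×X×D under which D is independent of S (i.e., for all s,d: Pr_p(S=s, D=d) = Pr_p(S=s)·Pr_p(D=d)). Then there exists a probability mass function q on S×X×D×Df such that: (i) the marginal of q over (S,X,D) equals p; (ii) q assigns probability 1 to the event Df = D; and (iii) q satisfies the fair-model independencies. In particular, every fair distribution without a latent decision variable is the marginal of a latent-fair-decision model. -/
/-!
Let the latent decision be a copy of the observed one: `q(s,x,d,df) = [df = d] · p(s,x,d)`.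
Then `b(d|s,df) = [d = df]`, the marginal of `Df` under `q` is that of `D` under `p`, and
independence of `D` and `S` says exactly that `Pr_p(S=s) · Pr_p(D=df) = Σₓ p(s,x,df)`, so
`a(·|s,df)` can be taken to be the conditional law of `X` given `S = s, D = df`.
-/

/-- A probability mass function on a finite type: nonnegative and sums to one. -/
def IsPMF {α : Type*} [Fintype α] (p : α → ℝ) : Prop :=
  (∀ a, 0 ≤ p a) ∧ ∑ a, p a = 1

/-- `q` over `S × X × D × Df` satisfies the fair-model independencies:
`q(s,x,d,df) = q_S(s) · q_F(df) · a(x|s,df) · b(d|s,df)` where `q_S`, `q_F` are the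
marginals of `q` over `S` and `Df`, and `a(·|s,df)`, `b(·|s,df)` are families of
conditional pmfs over `X` and `D`. -/
def FairIndep {X : Type*} [Fintype X] (q : Bool × X × Bool × Bool → ℝ) : Prop :=
  ∃ (a : Bool → Bool → X → ℝ) (b : Bool → Bool → Bool → ℝ),
    (∀ s df x, 0 ≤ a s df x) ∧ (∀ s df, ∑ x, a s df x = 1) ∧
    (∀ s df d, 0 ≤ b s df d) ∧ (∀ s df, ∑ d, b s df d = 1) ∧
    (∀ s x d df, q (s, x, d, df) =
      (∑ x', ∑ d', ∑ df', q (s, x', d', df')) *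
      (∑ s', ∑ x', ∑ d', q (s', x', d', df)) * a s df x * b s df d)

open Finset

section Normalize

variable {α : Type*} [Fintype α]

noncomputable def normalizeOr (w μ : α → ℝ) : α → ℝ :=
  if ∑ a, w a = 0 then μ else fun a => w a / ∑ a', w a'

lemma isPMF_normalizeOr {w μ : α → ℝ} (hw : ∀ a, 0 ≤ w a) (hμ : IsPMF μ) :
    IsPMF (normalizeOr w μ) := by
  unfold normalizeOr
  split_ifs with h
  · exact hμ
  · exact ⟨fun a => div_nonneg (hw a) (sum_nonneg fun a' _ => hw a'),
      by rw [← sum_div, div_self h]⟩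

lemma sum_mul_normalizeOr {w : α → ℝ} (μ : α → ℝ) (hw : ∀ a, 0 ≤ w a) (a : α) :
    (∑ a', w a') * normalizeOr w μ a = w a := by
  unfold normalizeOr
  split_ifs with h
  · rw [h, zero_mul, (sum_eq_zero_iff_of_nonneg fun a' _ => hw a').mp h a (mem_univ a)]
  · exact mul_div_cancel₀ (w a) h

end Normalize

section LatentCopy

variable {X : Type*}

lemma isPMF_marginal_X [Fintype X] {p : Bool × X × Bool → ℝ} (hp : IsPMF p) :
    IsPMF fun x => ∑ s, ∑ d, p (s, x, d) := by
  refine ⟨fun x => sum_nonneg fun s _ => sum_nonneg fun d _ => hp.1 _, ?_⟩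
  rw [← hp.2, sum_comm]
  simp only [Fintype.sum_prod_type]

def copyDecision (p : Bool × X × Bool → ℝ) : Bool × X × Bool × Bool → ℝ :=
  fun t => if t.2.2.2 = t.2.2.1 then p (t.1, t.2.1, t.2.2.1) else 0

namespace copyDecision

variable (p : Bool × X × Bool → ℝ)

lemma apply (s : Bool) (x : X) (d df : Bool) :
    copyDecision p (s, x, d, df) = if df = d then p (s, x, d) else 0 := rfl

lemma sum_latent (s : Bool) (x : X) (d : Bool) :
    ∑ df, copyDecision p (s, x, d, df) = p (s, x, d) := by
  simp [apply]

variable [Fintype X]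

lemma sum_diag : ∑ s, ∑ x, ∑ d, copyDecision p (s, x, d, d) = ∑ t, p t := by
  simp [apply, Fintype.sum_prod_type]

lemma marginal_S (s : Bool) :
    ∑ x, ∑ d, ∑ df, copyDecision p (s, x, d, df) = ∑ x, ∑ d, p (s, x, d) := by
  simp only [sum_latent]

lemma marginal_Df (df : Bool) :
    ∑ s, ∑ x, ∑ d, copyDecision p (s, x, d, df) = ∑ s, ∑ x, p (s, x, df) := by
  simp [apply]

lemma isPMF {p : Bool × X × Bool → ℝ} (hp : IsPMF p) : IsPMF (copyDecision p) := by
  refine ⟨fun t => ?_, ?_⟩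
  · unfold copyDecision
    split_ifs
    exacts [hp.1 _, le_rfl]
  · rw [← hp.2]
    simp only [Fintype.sum_prod_type, sum_latent]

lemma fairIndep {p : Bool × X × Bool → ℝ} (hp : IsPMF p)
    (hindep : ∀ s d : Bool,
      (∑ x, p (s, x, d)) = (∑ x, ∑ d', p (s, x, d')) * (∑ s', ∑ x, p (s', x, d))) :
    FairIndep (copyDecision p) := by
  -- On a null event `S = s, D = df` any pmf on `X` serves as `a(·|s,df)`; we take the
  -- `X`-marginal of `p`.
  have ha (s df : Bool) :=
    isPMF_normalizeOr (fun x => hp.1 (s, x, df)) (isPMF_marginal_X hp)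
  refine ⟨fun s df => normalizeOr (fun x => p (s, x, df)) fun x => ∑ s, ∑ d, p (s, x, d),
    fun _ df d => if d = df then 1 else 0, fun s df => (ha s df).1, fun s df => (ha s df).2,
    fun _ _ _ => by positivity, fun _ _ => by simp, fun s x d df => ?_⟩
  rw [marginal_S, marginal_Df, apply]
  beta_reduce
  by_cases hd : df = d
  · subst hd
    rw [if_pos rfl, if_pos rfl, mul_one, ← hindep, sum_mul_normalizeOr _ fun x => hp.1 _]
  · rw [if_neg hd, if_neg (Ne.symm hd), mul_zero]

end copyDecision

end LatentCopy

theorem fair_dist_is_marginal_of_latent_fair_model_general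
    {X : Type*} [Fintype X]
    (p : Bool × X × Bool → ℝ) (hp : IsPMF p)
    (hindep : ∀ s d : Bool,
      (∑ x, p (s, x, d)) =
        (∑ x, ∑ d', p (s, x, d')) * (∑ s', ∑ x, p (s', x, d))) :
    ∃ q : Bool × X × Bool × Bool → ℝ,
      IsPMF q ∧
      (∀ (s : Bool) (x : X) (d : Bool), ∑ df, q (s, x, d, df) = p (s, x, d)) ∧
      (∑ s, ∑ x, ∑ d, q (s, x, d, d) = 1) ∧
      FairIndep q :=
  ⟨copyDecision p, copyDecision.isPMF hp, copyDecision.sum_latent p,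
    (copyDecision.sum_diag p).trans hp.2, copyDecision.fairIndep hp hindep⟩

/-- Every fair distribution `p` over `(S, X, D)` (i.e. with `D ⫫ S`) is the marginal of a
latent-fair-decision model: there is a pmf `q` over `(S, X, D, Df)` satisfying the fair-model
independencies, whose `(S,X,D)`-marginal is `p` and which assigns probability 1 to `Df = D`. -/
theorem fair_dist_is_marginal_of_latent_fair_model
    {X : Type*} [Fintype X] [Nonempty X]
    (p : Bool × X × Bool → ℝ) (hp : IsPMF p)
    (hindep : ∀ s d : Bool,
      (∑ x, p (s, x, d)) =
        (∑ x, ∑ d', p (s, x, d')) * (∑ s', ∑ x, p (s', x, d))) :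
    ∃ q : Bool × X × Bool × Bool → ℝ,
      IsPMF q ∧
      (∀ (s : Bool) (x : X) (d : Bool), ∑ df, q (s, x, d, df) = p (s, x, d)) ∧
      (∑ s, ∑ x, ∑ d, q (s, x, d, d) = 1) ∧
      FairIndep q :=
  fair_dist_is_marginal_of_latent_fair_model_general p hp hindep
end

section
/- Let S, D, Df be Boolean variables and X range over a finite nonempty type. Let q be a probability mass function on S×X×D×Df satisfying the fair-model independencies with conditional pmfs a(·|s,df) for X and b(·|s,df) for D, and suppose moreover that b(d|s,df) = 1 if d = df and 0 otherwise (i.e., q assigns probability 1 to the event D = Df). Then the marginal r of q over (S,X,D) factorizes as r(s,x,d) = r_S(s) · r_D(d) · r(x | s,d) for all (s,x,d) with r_S(s)·r_D(d) > 0, where r_S and r_D are the marginals of r over S and D and r(·|s,d) is the conditional pmf of X given (S,D)=(s,d). In particular, D is independent of S under r. -/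
/-- Marginal of `q : S × X × D × Df → ℝ` over `(S, X, D)`. -/
def marg3 {X : Type*} [Fintype X] (q : Bool × X × Bool × Bool → ℝ) :
    Bool × X × Bool → ℝ :=
  fun w => ∑ df, q (w.1, w.2.1, w.2.2, df)

/-- Marginal over `S` of a pmf on `S × X × D`. -/
def margS {X : Type*} [Fintype X] (r : Bool × X × Bool → ℝ) : Bool → ℝ :=
  fun s => ∑ x, ∑ d, r (s, x, d)

/-- Marginal over `D` of a pmf on `S × X × D`. -/
def margD {X : Type*} [Fintype X] (r : Bool × X × Bool → ℝ) : Bool → ℝ :=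
  fun d => ∑ s, ∑ x, r (s, x, d)

/-- Marginal over `(S, D)` of a pmf on `S × X × D`. -/
def margSD {X : Type*} [Fintype X] (r : Bool × X × Bool → ℝ) : Bool → Bool → ℝ :=
  fun s d => ∑ x, r (s, x, d)

/-!
Since `q` is supported on `D = Df`, the `D`-marginal of `r = marg3 q` is the `Df`-marginal `q_F`
of `q`, while its `S`-marginal is `q_S`. On the diagonal the fair-model factorization reads
`r(s,x,d) = q_S(s) · q_F(d) · a(x|s,d)`, and summing out `x` gives `r(s,d) = q_S(s) · q_F(d)`.
-/

section DiagonalSupport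

variable {X : Type*} [Fintype X] (q : Bool × X × Bool × Bool → ℝ)
  (hsupp : ∀ s x d df, d ≠ df → q (s, x, d, df) = 0)
include hsupp

theorem marg3_eq_diag (s : Bool) (x : X) (d : Bool) : marg3 q (s, x, d) = q (s, x, d, d) :=
  Finset.sum_eq_single d (fun df _ h => hsupp s x d df (Ne.symm h)) (by simp)

theorem margD_marg3_eq_latent_marginal (d : Bool) :
    margD (marg3 q) d = ∑ s, ∑ x, ∑ d', q (s, x, d', d) := by
  refine Fintype.sum_congr _ _ fun s => Fintype.sum_congr _ _ fun x => ?_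
  rw [marg3_eq_diag q hsupp, Finset.sum_eq_single d (fun d' _ h => hsupp s x d' d h) (by simp)]

theorem margSD_marg3_eq_of_diag (a : Bool → Bool → X → ℝ) (ha1 : ∀ s df, ∑ x, a s df x = 1)
    (c : Bool → Bool → ℝ) (hdiag : ∀ s x d, q (s, x, d, d) = c s d * a s d x) (s d : Bool) :
    margSD (marg3 q) s d = c s d := by
  simp only [margSD, marg3_eq_diag q hsupp, hdiag, ← Finset.mul_sum, ha1, mul_one]

end DiagonalSupport

theorem latent_fair_model_det_b_marginal_factorizes_general
    {X : Type*} [Fintype X]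
    (q : Bool × X × Bool × Bool → ℝ)
    (a : Bool → Bool → X → ℝ) (b : Bool → Bool → Bool → ℝ)
    (ha1 : ∀ s df, ∑ x, a s df x = 1)
    (hfact : ∀ (s : Bool) (x : X) (d df : Bool),
      q (s, x, d, df) =
        (∑ x', ∑ d', ∑ df', q (s, x', d', df')) *
        (∑ s', ∑ x', ∑ d', q (s', x', d', df)) * a s df x * b s df d)
    (hbdet : ∀ s df d : Bool, b s df d = if d = df then 1 else 0) :
    (∀ (s : Bool) (x : X) (d : Bool),
      0 < margS (marg3 q) s * margD (marg3 q) d →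
        marg3 q (s, x, d) =
          margS (marg3 q) s * margD (marg3 q) d *
            (marg3 q (s, x, d) / margSD (marg3 q) s d)) ∧
    (∀ s d : Bool, margSD (marg3 q) s d = margS (marg3 q) s * margD (marg3 q) d) := by
  have hsupp : ∀ s x d df, d ≠ df → q (s, x, d, df) = 0 := fun s x d df h => by
    rw [hfact, hbdet, if_neg h, mul_zero]
  have hindep : ∀ s d, margSD (marg3 q) s d = margS (marg3 q) s * margD (marg3 q) d := by
    intro s d
    rw [margD_marg3_eq_latent_marginal q hsupp,
      margSD_marg3_eq_of_diag q hsupp a ha1 _ fun s x d => by rw [hfact, hbdet, if_pos rfl, mul_one]]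
    rfl
  refine ⟨fun s x d hpos => ?_, hindep⟩
  rw [← hindep, mul_div_cancel₀ _ (hindep s d ▸ hpos.ne')]

/-- If `q` over `(S, X, D, Df)` satisfies the fair-model independencies with conditional pmf
families `a(·|s,df)` over `X` and `b(·|s,df)` over `D`, and moreover `b(d|s,df) = [d = df]`
(so `q` assigns probability 1 to `D = Df`), then the marginal `r` of `q` over `(S, X, D)`
factorizes as `r(s,x,d) = r_S(s) · r_D(d) · r(x|s,d)` whenever `r_S(s) · r_D(d) > 0`;
in particular `D` and `S` are independent under `r`. -/
theorem latent_fair_model_det_b_marginal_factorizes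
    {X : Type*} [Fintype X] [Nonempty X]
    (q : Bool × X × Bool × Bool → ℝ) (hq : IsPMF q)
    (a : Bool → Bool → X → ℝ) (b : Bool → Bool → Bool → ℝ)
    (ha0 : ∀ s df x, 0 ≤ a s df x) (ha1 : ∀ s df, ∑ x, a s df x = 1)
    (hb0 : ∀ s df d, 0 ≤ b s df d) (hb1 : ∀ s df, ∑ d, b s df d = 1)
    (hfact : ∀ (s : Bool) (x : X) (d df : Bool),
      q (s, x, d, df) =
        (∑ x', ∑ d', ∑ df', q (s, x', d', df')) *
        (∑ s', ∑ x', ∑ d', q (s', x', d', df)) * a s df x * b s df d)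
    (hbdet : ∀ s df d : Bool, b s df d = if d = df then 1 else 0) :
    (∀ (s : Bool) (x : X) (d : Bool),
      0 < margS (marg3 q) s * margD (marg3 q) d →
        marg3 q (s, x, d) =
          margS (marg3 q) s * margD (marg3 q) d *
            (marg3 q (s, x, d) / margSD (marg3 q) s d)) ∧
    (∀ s d : Bool, margSD (marg3 q) s d = margS (marg3 q) s * margD (marg3 q) d) :=
  latent_fair_model_det_b_marginal_factorizes_general q a b ha1 hfact hbdet
end

section
/- There exists a probability mass function q over S×X×D×Df, with S, X, D, Df all Boolean, that satisfies the fair-model independencies and whose marginal over (S,D) has Pr_q(S=0) > 0, Pr_q(S=1) > 0, and Pr_q(D=1 | S=1) ≠ Pr_q(D=1 | S=0). Hence the latent-fair-decision model can also represent distributions in which the observed label D depends on the sensitive attribute S, so its family of marginals over (S,X,D) strictly contains the family of distributions in which D is independent of S. -/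
/-!
The model only forces the latent decision `Df` to be independent of `S`; the observed label may
depend on `S` through `b(d | s, df)`. Taking `S`, `Df` and `X` uniform and letting the label copy
the sensitive attribute, `b(d | s, df) = [d = s]`, gives `Pr(D=1 | S=1) = 1 ≠ 0 = Pr(D=1 | S=0)`.
-/

theorem isPMF_uniform {α : Type*} [Fintype α] [Nonempty α] :
    IsPMF (fun _ : α => (Fintype.card α : ℝ)⁻¹) :=
  ⟨fun _ => by positivity, by simp⟩

theorem isPMF_ite_eq {α : Type*} [Fintype α] [DecidableEq α] (a : α) :
    IsPMF (fun x : α => if x = a then (1 : ℝ) else 0) :=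
  ⟨fun _ => by positivity, by simp⟩

namespace FairModel

variable {X : Type*} [Fintype X]

def joint (qS qF : Bool → ℝ) (a : Bool → Bool → X → ℝ) (b : Bool → Bool → Bool → ℝ) :
    Bool × X × Bool × Bool → ℝ
  | (s, x, d, df) => qS s * qF df * a s df x * b s df d

variable {qS qF : Bool → ℝ} {a : Bool → Bool → X → ℝ} {b : Bool → Bool → Bool → ℝ}

theorem sum_joint_S (hF : ∑ df, qF df = 1) (ha : ∀ s df, ∑ x, a s df x = 1)
    (hb : ∀ s df, ∑ d, b s df d = 1) (s : Bool) :
    ∑ x, ∑ d, ∑ df, joint qS qF a b (s, x, d, df) = qS s := by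
  have : ∑ x, ∑ d, ∑ df, joint qS qF a b (s, x, d, df) =
      qS s * ∑ df, qF df * (∑ x, a s df x) * ∑ d, b s df d := by
    simp only [joint, Fintype.sum_bool, Finset.sum_add_distrib, ← Finset.sum_mul,
      ← Finset.mul_sum]
    ring
  simp only [this, ha, hb, hF, mul_one]

theorem sum_joint_Df (hS : ∑ s, qS s = 1) (ha : ∀ s df, ∑ x, a s df x = 1)
    (hb : ∀ s df, ∑ d, b s df d = 1) (df : Bool) :
    ∑ s, ∑ x, ∑ d, joint qS qF a b (s, x, d, df) = qF df := by
  have : ∑ s, ∑ x, ∑ d, joint qS qF a b (s, x, d, df) =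
      qF df * ∑ s, qS s * (∑ x, a s df x) * ∑ d, b s df d := by
    simp only [joint, Fintype.sum_bool, ← Finset.sum_mul, ← Finset.mul_sum]
    ring
  simp only [this, ha, hb, hS, mul_one]

theorem sum_joint_label (ha : ∀ s df, ∑ x, a s df x = 1) (s d : Bool) :
    ∑ x, ∑ df, joint qS qF a b (s, x, d, df) = qS s * ∑ df, qF df * b s df d := by
  have : ∑ x, ∑ df, joint qS qF a b (s, x, d, df) =
      qS s * ∑ df, qF df * (∑ x, a s df x) * b s df d := by
    simp only [joint, Fintype.sum_bool, Finset.sum_add_distrib, ← Finset.sum_mul,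
      ← Finset.mul_sum]
    ring
  simp only [this, ha, mul_one]

theorem isPMF_joint (hS : IsPMF qS) (hF : IsPMF qF) (ha : ∀ s df, IsPMF (a s df))
    (hb : ∀ s df, IsPMF (b s df)) : IsPMF (joint qS qF a b) := by
  refine ⟨fun ⟨s, x, d, df⟩ => ?_, ?_⟩
  · exact mul_nonneg (mul_nonneg (mul_nonneg (hS.1 s) (hF.1 df)) ((ha s df).1 x)) ((hb s df).1 d)
  · simp only [Fintype.sum_prod_type,
      sum_joint_S hF.2 (fun s df => (ha s df).2) (fun s df => (hb s df).2), hS.2]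

theorem fairIndep_joint (hS : ∑ s, qS s = 1) (hF : ∑ df, qF df = 1)
    (ha : ∀ s df, IsPMF (a s df)) (hb : ∀ s df, IsPMF (b s df)) :
    FairIndep (joint qS qF a b) := by
  have ha₁ s df : ∑ x, a s df x = 1 := (ha s df).2
  have hb₁ s df : ∑ d, b s df d = 1 := (hb s df).2
  refine ⟨a, b, fun s df => (ha s df).1, ha₁, fun s df => (hb s df).1, hb₁,
    fun s x d df => ?_⟩
  rw [sum_joint_S hF ha₁ hb₁, sum_joint_Df hS ha₁ hb₁]
  rfl

theorem cond_label_joint (hF : ∑ df, qF df = 1) (ha : ∀ s df, ∑ x, a s df x = 1)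
    (hb : ∀ s df, ∑ d, b s df d = 1) {s : Bool} (hs : qS s ≠ 0) (d : Bool) :
    (∑ x, ∑ df, joint qS qF a b (s, x, d, df)) / (∑ x, ∑ d, ∑ df, joint qS qF a b (s, x, d, df))
      = ∑ df, qF df * b s df d := by
  rw [sum_joint_label ha, sum_joint_S hF ha hb, mul_div_cancel_left₀ _ hs]

end FairModel

open FairModel in
/-- There is a pmf `q` over `S × X × D × Df` (all Boolean) satisfying the fair-model
independencies whose `(S, D)`-marginal has `Pr(S=0) > 0`, `Pr(S=1) > 0` and
`Pr(D=1 | S=1) ≠ Pr(D=1 | S=0)`: the latent-fair-decision model can represent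
distributions in which the observed label `D` depends on the sensitive attribute `S`. -/
theorem latent_fair_model_can_have_dependent_observed_label :
    ∃ q : Bool × Bool × Bool × Bool → ℝ,
      IsPMF q ∧ FairIndep q ∧
      (0 < ∑ x, ∑ d, ∑ df, q (false, x, d, df)) ∧
      (0 < ∑ x, ∑ d, ∑ df, q (true, x, d, df)) ∧
      (∑ x, ∑ df, q (true, x, true, df)) / (∑ x, ∑ d, ∑ df, q (true, x, d, df)) ≠
        (∑ x, ∑ df, q (false, x, true, df)) / (∑ x, ∑ d, ∑ df, q (false, x, d, df)) := by
  set u : Bool → ℝ := fun _ => (Fintype.card Bool : ℝ)⁻¹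
  set a : Bool → Bool → Bool → ℝ := fun _ _ => u
  set b : Bool → Bool → Bool → ℝ := fun s _ d => if d = s then 1 else 0
  have ha s df : IsPMF (a s df) := isPMF_uniform
  have hb s df : IsPMF (b s df) := isPMF_ite_eq s
  have hu : IsPMF u := isPMF_uniform
  have ha₁ s df : ∑ x, a s df x = 1 := (ha s df).2
  have hb₁ s df : ∑ d, b s df d = 1 := (hb s df).2
  have hu₀ s : u s ≠ 0 := by simp [u]
  refine ⟨joint u u a b, isPMF_joint hu hu ha hb, fairIndep_joint hu.2 hu.2 ha hb, ?_, ?_, ?_⟩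
  · rw [sum_joint_S hu.2 ha₁ hb₁]; simp [u]
  · rw [sum_joint_S hu.2 ha₁ hb₁]; simp [u]
  · rw [cond_label_joint hu.2 ha₁ hb₁ (hu₀ true), cond_label_joint hu.2 ha₁ hb₁ (hu₀ false)]
    simp [b, u]
end

section
/- Let X range over a finite nonempty type, let S and D be Boolean, and let p be a probability mass function on X×S×D with Pr_p(S=1) > 0 and Pr_p(S=0) > 0. Let f(x,s) = Pr_p(D=1 | X=x, S=s) whenever Pr_p(X=x, S=s) > 0 (f arbitrary elsewhere). Then the following are equivalent: (i) f satisfies generalized demographic parity with respect to the marginal of p over (X,S); (ii) Pr_p(D=1 | S=1) = Pr_p(D=1 | S=0); (iii) D and S are independent under p, i.e., Pr_p(S=s, D=d) = Pr_p(S=s)·Pr_p(D=d) for all s,d. -/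
lemma sum_mul_eq_of_pos_imp_eq_div {ι : Type*} [Fintype ι] {w : ι → ℝ} (hw : ∀ i, 0 ≤ w i)
    {c : ℝ} (i : ι) (hc : 0 < ∑ j, w j → c = w i / ∑ j, w j) : (∑ j, w j) * c = w i := by
  rcases (Finset.sum_nonneg fun j _ => hw j).eq_or_lt with hzero | hpos
  · have hwi : w i = 0 :=
      (Finset.sum_eq_zero_iff_of_nonneg fun j _ => hw j).1 hzero.symm i (Finset.mem_univ i)
    rw [← hzero, zero_mul, hwi]
  · rw [hc hpos, mul_div_cancel₀ _ hpos.ne']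

lemma div_eq_div_iff_forall_eq_mul_of_sum_eq_one {q : Bool → Bool → ℝ}
    (hq : ∑ s, ∑ d, q s d = 1) (h1 : 0 < ∑ d, q true d) (h0 : 0 < ∑ d, q false d) :
    q true true / ∑ d, q true d = q false true / ∑ d, q false d ↔
      ∀ s d, q s d = (∑ d', q s d') * ∑ s', q s' d := by
  simp only [Fintype.sum_bool] at hq h1 h0 ⊢
  rw [div_eq_div_iff h1.ne' h0.ne']
  constructor
  · intro h s d
    cases s <;> cases d
    · linear_combination (-q false false) * hq + h
    · linear_combination (-q false true) * hq - h
    · linear_combination (-q true false) * hq - h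
    · linear_combination (-q true true) * hq + h
  · intro h
    linear_combination (q false true + q false false) * h true true -
      (q true true + q true false) * h false true

theorem demographic_parity_tfae_general
    {X : Type*} [Fintype X]
    (p : X × Bool × Bool → ℝ) (hp : IsPMF p)
    (hs1 : 0 < ∑ x, ∑ d, p (x, true, d))
    (hs0 : 0 < ∑ x, ∑ d, p (x, false, d))
    (f : X × Bool → ℝ)
    (hf : ∀ (x : X) (s : Bool), 0 < ∑ d, p (x, s, d) →
      f (x, s) = p (x, s, true) / ∑ d, p (x, s, d)) :
    (((∑ x, (∑ d, p (x, true, d)) * f (x, true)) / (∑ x, ∑ d, p (x, true, d)) =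
        (∑ x, (∑ d, p (x, false, d)) * f (x, false)) / (∑ x, ∑ d, p (x, false, d))) ↔
      ((∑ x, p (x, true, true)) / (∑ x, ∑ d, p (x, true, d)) =
        (∑ x, p (x, false, true)) / (∑ x, ∑ d, p (x, false, d)))) ∧
    (((∑ x, p (x, true, true)) / (∑ x, ∑ d, p (x, true, d)) =
        (∑ x, p (x, false, true)) / (∑ x, ∑ d, p (x, false, d))) ↔
      (∀ s d : Bool, (∑ x, p (x, s, d)) =
        (∑ x, ∑ d', p (x, s, d')) * (∑ x, ∑ s', p (x, s', d)))) := by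
  obtain ⟨hp_nonneg, hp_sum⟩ := hp
  have hnum : ∀ s, ∑ x, (∑ d, p (x, s, d)) * f (x, s) = ∑ x, p (x, s, true) := fun s =>
    Finset.sum_congr rfl fun x _ =>
      sum_mul_eq_of_pos_imp_eq_div (fun d => hp_nonneg _) true (hf x s)
  have hrow : ∀ s, ∑ x, ∑ d, p (x, s, d) = ∑ d, ∑ x, p (x, s, d) := fun _ => Finset.sum_comm
  have hcol : ∀ d, ∑ x, ∑ s, p (x, s, d) = ∑ s, ∑ x, p (x, s, d) := fun _ => Finset.sum_comm
  have htotal : ∑ s, ∑ d, ∑ x, p (x, s, d) = 1 := by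
    simp only [← hrow, ← hp_sum, Fintype.sum_prod_type]
    exact Finset.sum_comm
  refine ⟨by rw [hnum, hnum], ?_⟩
  rw [hrow] at hs1 hs0
  simp only [hrow, hcol]
  exact div_eq_div_iff_forall_eq_mul_of_sum_eq_one htotal hs1 hs0

/-- Let `p` be a pmf on `X × S × D` (`S`, `D` Boolean) with both groups of positive
probability, and let `f(x,s) = Pr_p(D=1 | X=x, S=s)` whenever `Pr_p(X=x, S=s) > 0`
(`f` arbitrary elsewhere).  Then the following are equivalent:
(i) `f` satisfies generalized demographic parity w.r.t. the `(X,S)`-marginal of `p`;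
(ii) `Pr_p(D=1 | S=1) = Pr_p(D=1 | S=0)`;
(iii) `D` and `S` are independent under `p`. -/
theorem demographic_parity_tfae
    {X : Type*} [Fintype X] [Nonempty X]
    (p : X × Bool × Bool → ℝ) (hp : IsPMF p)
    (hs1 : 0 < ∑ x, ∑ d, p (x, true, d))
    (hs0 : 0 < ∑ x, ∑ d, p (x, false, d))
    (f : X × Bool → ℝ)
    (hf : ∀ (x : X) (s : Bool), 0 < ∑ d, p (x, s, d) →
      f (x, s) = p (x, s, true) / ∑ d, p (x, s, d)) :
    (((∑ x, (∑ d, p (x, true, d)) * f (x, true)) / (∑ x, ∑ d, p (x, true, d)) =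
        (∑ x, (∑ d, p (x, false, d)) * f (x, false)) / (∑ x, ∑ d, p (x, false, d))) ↔
      ((∑ x, p (x, true, true)) / (∑ x, ∑ d, p (x, true, d)) =
        (∑ x, p (x, false, true)) / (∑ x, ∑ d, p (x, false, d)))) ∧
    (((∑ x, p (x, true, true)) / (∑ x, ∑ d, p (x, true, d)) =
        (∑ x, p (x, false, true)) / (∑ x, ∑ d, p (x, false, d))) ↔
      (∀ s d : Bool, (∑ x, p (x, s, d)) =
        (∑ x, ∑ d', p (x, s, d')) * (∑ x, ∑ s', p (x, s', d)))) :=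
  demographic_parity_tfae_general p hp hs1 hs0 f hf
end

section
/- Let X range over a finite nonempty type, let S and Df be Boolean, and let q be a probability mass function over X×S×Df with Pr_q(S=1) > 0 and Pr_q(S=0) > 0, under which Df is independent of S (Pr_q(S=s, Df=df) = Pr_q(S=s)·Pr_q(Df=df) for all s,df). Let f(x,s) = Pr_q(Df=1 | X=x, S=s) whenever Pr_q(X=x, S=s) > 0 (f arbitrary elsewhere). Then f satisfies generalized demographic parity with respect to the marginal of q over (X,S); moreover E_q[f(X,S) | S=1] = E_q[f(X,S) | S=0] = Pr_q(Df=1). -/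
/-
Because `f` is the conditional probability of `Df = 1` wherever the `(X, S)`-cell has positive
mass, weighting it by that mass recovers the joint mass `Pr_q(X = x, S = s, Df = 1)` for every
cell (a null cell carries no mass for `Df = 1` either). Summing over `x` turns the numerator of the
group-conditional expectation into `Pr_q(S = s, Df = 1)`, which by independence equals
`Pr_q(S = s) · Pr_q(Df = 1)`; dividing by `Pr_q(S = s) > 0` leaves `Pr_q(Df = 1)` for both groups.
-/

theorem mul_eq_of_eq_div_of_pos {w a y : ℝ} (hw : 0 ≤ w) (ha : w = 0 → a = 0)
    (hy : 0 < w → y = a / w) : w * y = a := by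
  rcases hw.lt_or_eq with hpos | hzero
  · rw [hy hpos, mul_div_cancel₀ _ hpos.ne']
  · rw [← hzero, ha hzero.symm, zero_mul]

section LatentFairness

variable {X : Type*} (q : X × Bool × Bool → ℝ)

theorem cell_mass_mul_conditional_eq (hq : ∀ a, 0 ≤ q a) (f : X × Bool → ℝ)
    (hf : ∀ (x : X) (s : Bool), 0 < ∑ df, q (x, s, df) →
      f (x, s) = q (x, s, true) / ∑ df, q (x, s, df))
    (x : X) (s : Bool) :
    (∑ df, q (x, s, df)) * f (x, s) = q (x, s, true) := by
  refine mul_eq_of_eq_div_of_pos (Finset.sum_nonneg fun df _ => hq _) (fun h => ?_) (hf x s)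
  exact (Finset.sum_eq_zero_iff_of_nonneg fun df _ => hq _).mp h true (Finset.mem_univ _)

theorem group_expectation_eq_prob_df_true [Fintype X] (hq : ∀ a, 0 ≤ q a) (s : Bool)
    (hs : 0 < ∑ x, ∑ df, q (x, s, df))
    (hindep : (∑ x, q (x, s, true)) =
      (∑ x, ∑ df, q (x, s, df)) * (∑ x, ∑ s', q (x, s', true)))
    (f : X × Bool → ℝ)
    (hf : ∀ (x : X) (s : Bool), 0 < ∑ df, q (x, s, df) →
      f (x, s) = q (x, s, true) / ∑ df, q (x, s, df)) :
    (∑ x, (∑ df, q (x, s, df)) * f (x, s)) / (∑ x, ∑ df, q (x, s, df)) =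
      ∑ x, ∑ s', q (x, s', true) := by
  simp only [cell_mass_mul_conditional_eq q hq f hf]
  rw [hindep, mul_div_cancel_left₀ _ hs.ne']

end LatentFairness

theorem latent_fair_classifier_satisfies_demographic_parity_general
    {X : Type*} [Fintype X]
    (q : X × Bool × Bool → ℝ) (hq : IsPMF q)
    (hs1 : 0 < ∑ x, ∑ df, q (x, true, df))
    (hs0 : 0 < ∑ x, ∑ df, q (x, false, df))
    (hindep : ∀ s df : Bool, (∑ x, q (x, s, df)) =
      (∑ x, ∑ df', q (x, s, df')) * (∑ x, ∑ s', q (x, s', df)))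
    (f : X × Bool → ℝ)
    (hf : ∀ (x : X) (s : Bool), 0 < ∑ df, q (x, s, df) →
      f (x, s) = q (x, s, true) / ∑ df, q (x, s, df)) :
    (∑ x, (∑ df, q (x, true, df)) * f (x, true)) / (∑ x, ∑ df, q (x, true, df)) =
        (∑ x, ∑ s, q (x, s, true)) ∧
    (∑ x, (∑ df, q (x, false, df)) * f (x, false)) / (∑ x, ∑ df, q (x, false, df)) =
        (∑ x, ∑ s, q (x, s, true)) :=
  ⟨group_expectation_eq_prob_df_true q hq.1 true hs1 (hindep true true) f hf,
    group_expectation_eq_prob_df_true q hq.1 false hs0 (hindep false true) f hf⟩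

/-- Let `q` be a pmf over `X × S × Df` (`S`, `Df` Boolean) with both groups of positive
probability, under which `Df` is independent of `S`, and let
`f(x,s) = Pr_q(Df=1 | X=x, S=s)` whenever `Pr_q(X=x, S=s) > 0` (`f` arbitrary elsewhere).
Then `f` satisfies generalized demographic parity w.r.t. the `(X,S)`-marginal of `q`;
indeed both group-conditional expectations equal `Pr_q(Df = 1)`. -/
theorem latent_fair_classifier_satisfies_demographic_parity
    {X : Type*} [Fintype X] [Nonempty X]
    (q : X × Bool × Bool → ℝ) (hq : IsPMF q)
    (hs1 : 0 < ∑ x, ∑ df, q (x, true, df))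
    (hs0 : 0 < ∑ x, ∑ df, q (x, false, df))
    (hindep : ∀ s df : Bool, (∑ x, q (x, s, df)) =
      (∑ x, ∑ df', q (x, s, df')) * (∑ x, ∑ s', q (x, s', df)))
    (f : X × Bool → ℝ)
    (hf : ∀ (x : X) (s : Bool), 0 < ∑ df, q (x, s, df) →
      f (x, s) = q (x, s, true) / ∑ df, q (x, s, df)) :
    (∑ x, (∑ df, q (x, true, df)) * f (x, true)) / (∑ x, ∑ df, q (x, true, df)) =
        (∑ x, ∑ s, q (x, s, true)) ∧
    (∑ x, (∑ df, q (x, false, df)) * f (x, false)) / (∑ x, ∑ df, q (x, false, df)) =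
        (∑ x, ∑ s, q (x, s, true)) :=
  latent_fair_classifier_satisfies_demographic_parity_general q hq hs1 hs0 hindep f hf
end

section
/- EM monotonicity for a deterministic mixture: let (Z, C, {A_c}, {p_c}) be a deterministic mixture, let E_1, …, E_N ⊆ Z with N ≥ 1 be observed events, and let θ be mixture weights in the probability simplex with Pr_θ(E_i) > 0 for all i. Let θ*_c = (Σ_{i=1}^N Pr_θ(A_c | E_i)) / N be the EM update given by the normalized expected flows. Then the marginal likelihood of the observed data does not decrease: Π_{i=1}^N Pr_{θ*}(E_i) ≥ Π_{i=1}^N Pr_θ(E_i). -/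
/-- The expected flow of component `c` for a mixture with components `p`, weights `θ`, and
observed events `E_1, …, E_N`: `EF_c = ∑_i Pr_θ(A_c | E_i) = ∑_i θ_c · p_c(E_i) / Pr_θ(E_i)`. -/
noncomputable def expFlow {Z C : Type*} [Fintype Z] [Fintype C]
    (p : C → Z → ℝ) (θ : C → ℝ) (N : ℕ) (E : Fin N → Finset Z) : C → ℝ :=
  fun c => ∑ i, θ c * (∑ z ∈ E i, p c z) / (∑ z ∈ E i, ∑ c', θ c' * p c' z)


/-!
Write `θ*_c = θ_c r_c`. Then `Pr_{θ*}(E_i) = Pr_θ(E_i) · ∑_c Pr_θ(A_c | E_i) r_c`, and weighted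
AM-GM bounds the last sum below by `∏_c r_c ^ Pr_θ(A_c | E_i)`. Over all `i` these exponents add
up to `N θ*_c`, so the likelihood ratio is at least `(∏_c r_c ^ θ*_c) ^ N`, which is `≥ 1` by
Gibbs' inequality `KL(θ* ‖ θ) ≥ 0`.
-/

open Finset Real

/-- Gibbs' inequality in multiplicative form, for `w = θ t`: `KL(w ‖ θ) = ∑ w log t ≥ 0`. -/
lemma one_le_prod_rpow_mul_self {C : Type*} [Fintype C] {θ t : C → ℝ} (hθ : ∀ c, 0 ≤ θ c)
    (hθ1 : ∑ c, θ c ≤ 1) (ht : ∀ c, 0 ≤ t c) (hw : ∑ c, θ c * t c = 1) :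
    1 ≤ ∏ c, t c ^ (θ c * t c) := by
  have hpos : 0 < ∏ c, t c ^ (θ c * t c) := prod_pos fun c _ => by
    rcases (ht c).eq_or_lt with h | h
    · simp [← h]
    · exact rpow_pos_of_pos h _
  have hamgm : ∏ c, (t c)⁻¹ ^ (θ c * t c) ≤ ∑ c, θ c * t c * (t c)⁻¹ :=
    geom_mean_le_arith_mean_weighted univ _ _ (fun c _ => mul_nonneg (hθ c) (ht c)) hw
      fun c _ => inv_nonneg.2 (ht c)
  have hsum : ∑ c, θ c * t c * (t c)⁻¹ ≤ 1 := by
    refine (sum_le_sum fun c _ => ?_).trans hθ1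
    rw [mul_assoc]
    exact mul_le_of_le_one_right (hθ c) mul_inv_le_one
  have hinv : ∏ c, (t c)⁻¹ ^ (θ c * t c) = (∏ c, t c ^ (θ c * t c))⁻¹ := by
    rw [← prod_inv_distrib]
    exact prod_congr rfl fun c _ => inv_rpow (ht c) _
  rw [← inv_le_one₀ hpos, ← hinv]
  exact hamgm.trans hsum

section Mixture

/- `P i c` stands for `p_c(E_i)`; then `mixtureLik P θ i` is `Pr_θ(E_i)`, `posterior P θ i c` is
`Pr_θ(A_c | E_i)` and `emUpdate P θ` is `θ*`. -/
variable {ι C : Type*} [Fintype C] (P : ι → C → ℝ) (θ : C → ℝ)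

def mixtureLik (i : ι) : ℝ := ∑ c, θ c * P i c

noncomputable def posterior (i : ι) (c : C) : ℝ := θ c * P i c / mixtureLik P θ i

noncomputable def emUpdate [Fintype ι] (c : C) : ℝ := (∑ i, posterior P θ i c) / Fintype.card ι

noncomputable def emRatio [Fintype ι] (c : C) : ℝ :=
  (∑ i, P i c / mixtureLik P θ i) / Fintype.card ι

variable {P θ}

lemma mixtureLik_nonneg (hP : ∀ i c, 0 ≤ P i c) (hθ : ∀ c, 0 ≤ θ c) (i : ι) :
    0 ≤ mixtureLik P θ i :=
  sum_nonneg fun c _ => mul_nonneg (hθ c) (hP i c)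

lemma posterior_nonneg (hP : ∀ i c, 0 ≤ P i c) (hθ : ∀ c, 0 ≤ θ c) (i : ι) (c : C) :
    0 ≤ posterior P θ i c :=
  div_nonneg (mul_nonneg (hθ c) (hP i c)) (mixtureLik_nonneg hP hθ i)

lemma sum_posterior {i : ι} (hi : 0 < mixtureLik P θ i) : ∑ c, posterior P θ i c = 1 := by
  simp only [posterior]
  rw [← sum_div, ← mixtureLik, div_self hi.ne']

variable [Fintype ι]

lemma emRatio_nonneg (hP : ∀ i c, 0 ≤ P i c) (hθ : ∀ c, 0 ≤ θ c) (c : C) :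
    0 ≤ emRatio P θ c :=
  div_nonneg (sum_nonneg fun i _ => div_nonneg (hP i c) (mixtureLik_nonneg hP hθ i))
    (Nat.cast_nonneg _)

lemma emUpdate_eq_mul_emRatio (c : C) : emUpdate P θ c = θ c * emRatio P θ c := by
  simp only [emUpdate, emRatio, posterior, mul_div_assoc, ← mul_sum]

lemma sum_emUpdate [Nonempty ι] (hD : ∀ i, 0 < mixtureLik P θ i) : ∑ c, emUpdate P θ c = 1 := by
  simp only [emUpdate]
  rw [← sum_div, sum_comm, sum_congr rfl fun i _ => sum_posterior (hD i)]
  simp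

lemma sum_posterior_eq_emUpdate_mul_card [Nonempty ι] (c : C) :
    ∑ i, posterior P θ i c = emUpdate P θ c * Fintype.card ι := by
  rw [emUpdate, div_mul_cancel₀ _ (Nat.cast_ne_zero.2 Fintype.card_ne_zero)]

lemma mixtureLik_emUpdate {i : ι} (hi : 0 < mixtureLik P θ i) :
    mixtureLik P (emUpdate P θ) i = mixtureLik P θ i * ∑ c, posterior P θ i c * emRatio P θ c := by
  rw [mixtureLik, mul_sum]
  refine sum_congr rfl fun c _ => ?_
  rw [emUpdate_eq_mul_emRatio, posterior]
  field_simp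

theorem prod_mixtureLik_le_prod_mixtureLik_emUpdate (hP : ∀ i c, 0 ≤ P i c)
    (hθ : ∀ c, 0 ≤ θ c) (hθ1 : ∑ c, θ c ≤ 1) (hD : ∀ i, 0 < mixtureLik P θ i) :
    ∏ i, mixtureLik P θ i ≤ ∏ i, mixtureLik P (emUpdate P θ) i := by
  rcases isEmpty_or_nonempty ι with hι | hι
  · simp
  set r := emRatio P θ
  have hr : ∀ c, 0 ≤ r c := emRatio_nonneg hP hθ
  have hgibbs : 1 ≤ ∏ c, r c ^ emUpdate P θ c := by
    simp only [emUpdate_eq_mul_emRatio]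
    refine one_le_prod_rpow_mul_self hθ hθ1 hr ?_
    simpa only [emUpdate_eq_mul_emRatio] using sum_emUpdate hD
  have hexp : ∏ i, ∏ c, r c ^ posterior P θ i c = (∏ c, r c ^ emUpdate P θ c) ^ Fintype.card ι := by
    rw [prod_comm, ← prod_pow]
    refine prod_congr rfl fun c _ => ?_
    rw [← rpow_sum_of_nonneg (hr c) fun i _ => posterior_nonneg hP hθ i c,
      sum_posterior_eq_emUpdate_mul_card, rpow_mul_natCast (hr c)]
  calc ∏ i, mixtureLik P θ i
      ≤ (∏ i, mixtureLik P θ i) * (∏ c, r c ^ emUpdate P θ c) ^ Fintype.card ι :=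
        le_mul_of_one_le_right (prod_nonneg fun i _ => (hD i).le) (one_le_pow₀ hgibbs)
    _ = ∏ i, mixtureLik P θ i * ∏ c, r c ^ posterior P θ i c := by
        rw [← hexp, prod_mul_distrib]
    _ ≤ ∏ i, mixtureLik P θ i * ∑ c, posterior P θ i c * r c :=
        prod_le_prod (fun i _ => mul_nonneg (hD i).le (prod_nonneg fun c _ => rpow_nonneg (hr c) _))
          fun i _ => mul_le_mul_of_nonneg_left
            (geom_mean_le_arith_mean_weighted univ _ _ (fun c _ => posterior_nonneg hP hθ i c)
              (sum_posterior (hD i)) fun c _ => hr c) (hD i).le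
    _ = ∏ i, mixtureLik P (emUpdate P θ) i :=
        prod_congr rfl fun i _ => (mixtureLik_emUpdate (hD i)).symm

end Mixture

lemma sum_sum_mul_comm {Z C : Type*} [Fintype C] (s : Finset Z) (w : C → ℝ) (p : C → Z → ℝ) :
    ∑ z ∈ s, ∑ c, w c * p c z = ∑ c, w c * ∑ z ∈ s, p c z := by
  rw [sum_comm]
  simp only [mul_sum]

theorem em_update_does_not_decrease_likelihood_general
    {Z C : Type*} [Fintype Z] [Fintype C]
    (p : C → Z → ℝ) (hp : ∀ c, IsPMF (p c))
    (N : ℕ) (E : Fin N → Finset Z)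
    (θ : C → ℝ) (hθ0 : ∀ c, 0 ≤ θ c) (hθ1 : ∑ c, θ c = 1)
    (hposE : ∀ i : Fin N, 0 < ∑ z ∈ E i, ∑ c, θ c * p c z) :
    ∏ i, ∑ z ∈ E i, ∑ c, (expFlow p θ N E c / (N : ℝ)) * p c z ≥
      ∏ i, ∑ z ∈ E i, ∑ c, θ c * p c z := by
  set P : Fin N → C → ℝ := fun i c => ∑ z ∈ E i, p c z
  have hlik : ∀ w i, ∑ z ∈ E i, ∑ c, w c * p c z = mixtureLik P w i :=
    fun w i => sum_sum_mul_comm _ _ _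
  have hflow : ∀ c, expFlow p θ N E c / N = emUpdate P θ c := by
    intro c
    simp only [expFlow, emUpdate, posterior, hlik, Fintype.card_fin]
    rfl
  simp only [hflow, hlik] at hposE ⊢
  exact prod_mixtureLik_le_prod_mixtureLik_emUpdate
    (fun i c => sum_nonneg fun z _ => (hp c).1 z) hθ0 hθ1.le hposE

/-- EM monotonicity for a deterministic mixture: given a deterministic mixture
`(Z, C, {A_c}, {p_c})`, observed events `E_1, …, E_N` (`N ≥ 1`) and current weights `θ` in
the simplex with `Pr_θ(E_i) > 0` for all `i`, the EM update `θ*_c = (∑_i Pr_θ(A_c | E_i))/N`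
given by the normalized expected flows does not decrease the marginal likelihood of the
observed data: `∏_i Pr_{θ*}(E_i) ≥ ∏_i Pr_θ(E_i)`. -/
theorem em_update_does_not_decrease_likelihood
    {Z C : Type*} [Fintype Z] [DecidableEq Z] [Fintype C]
    (A : C → Finset Z) (hA : ∀ z : Z, ∃! c : C, z ∈ A c)
    (p : C → Z → ℝ) (hp : ∀ c, IsPMF (p c))
    (hsupp : ∀ (c : C) (z : Z), z ∉ A c → p c z = 0)
    (N : ℕ) (hN : 1 ≤ N) (E : Fin N → Finset Z)
    (θ : C → ℝ) (hθ0 : ∀ c, 0 ≤ θ c) (hθ1 : ∑ c, θ c = 1)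
    (hposE : ∀ i : Fin N, 0 < ∑ z ∈ E i, ∑ c, θ c * p c z) :
    ∏ i, ∑ z ∈ E i, ∑ c, (expFlow p θ N E c / (N : ℝ)) * p c z ≥
      ∏ i, ∑ z ∈ E i, ∑ c, θ c * p c z :=
  em_update_does_not_decrease_likelihood_general p hp N E θ hθ0 hθ1 hposE
end
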